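/- Let G(V,E) be a chordal graph with maximal cliques C_1, …, C_t, and let Q ∈ S_G be a partial symmetric matrix (entries specified on the diagonal and on positions corresponding to edges of G). Then Q admits a positive semidefinite completion (i.e., Q = Π_G(P) for some positive semidefinite P) if and only if every principal submatrix Q[C_i] indexed by a maximal clique C_i is positive semidefinite. -/

import Mathlib

open scoped Classical

/-- A graph is chordal if every cycle of length at least four has a chord. -/
def IsChordal {V : Type*} (G : SimpleGraph V) : Prop :=
  ∀ ⦃v : V⦄ (w : G.Walk v v), w.IsCycle → 4 ≤ w.length →
    ∃ a b, a ∈ w.support ∧ b ∈ w.support ∧ G.Adj a b ∧ ¬ w.toSubgraph.Adj a b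

/-- A maximal clique of `G`. -/
def IsMaximalClique {V : Type*} (G : SimpleGraph V) (C : Set V) : Prop :=
  G.IsClique C ∧ ∀ D, G.IsClique D → C ⊆ D → D = C

/-!
A chordal graph has a simplicial vertex `v`, one whose neighbourhood is a clique (Dirac). Indeed,
a minimum separator `S` of two non-adjacent vertices `a`, `b` is a clique: two non-adjacent
vertices of `S` would be joined by shortest paths through the side of `a` and through the side of
`b`, which together form a chordless cycle of length at least four. Induction applied to `S`
together with the side of `a` then gives a simplicial vertex on that side.

Removing `v` leaves a chordal graph, so by induction on the number of vertices the restriction of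
`Q` has a PSD completion `P'`. As `K = {v} ∪ N(v)` is a clique, `Q[K]` is PSD, hence a Gram
matrix; projecting the vector of `v` onto the span of the vectors of `N(v)` gives `z` supported
on `N(v)` with `(P' z)_u = Q_uv` for `u ∈ N(v)` and `zᵀ P' z ≤ Q_vv`. Bordering `P'` by the row
`P' z` and the corner `Q_vv` gives a PSD completion of `Q`, as it equals
`Rᵀ P' R + (Q_vv - zᵀ P' z) e_v e_vᵀ` with `R = [z | 1]`.
-/

universe u

open SimpleGraph Walk

namespace SimpleGraph.Walk

variable {V : Type*} {G : SimpleGraph V} {x y : V}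

theorem mem_edges_of_length_eq_one {p : G.Walk x y} (h : p.length = 1) : s(x, y) ∈ p.edges := by
  cases p with
  | nil => simp at h
  | cons _ q => cases q with
    | nil => simp
    | cons _ _ => simp at h

theorem exists_shorter_of_adj_start (w : G.Walk x y) {u : V} (hu : u ∈ w.support)
    (hxu : G.Adj x u) (he : s(x, u) ∉ w.edges) :
    ∃ w' : G.Walk x y, w'.support ⊆ w.support ∧ w'.length < w.length := by
  refine ⟨cons hxu (w.dropUntil u hu), ?_, ?_⟩
  · rw [support_cons]
    exact List.cons_subset.mpr ⟨w.start_mem_support, w.support_dropUntil_subset_support hu⟩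
  · have hlen := congrArg length (w.take_spec hu)
    have h0 : (w.takeUntil u hu).length ≠ 0 := fun h => hxu.ne (eq_of_length_eq_zero h)
    have h1 : (w.takeUntil u hu).length ≠ 1 := fun h =>
      he (w.edges_takeUntil_subset_edges hu (mem_edges_of_length_eq_one h))
    rw [length_append] at hlen
    rw [length_cons]
    omega

theorem exists_shorter_of_adj (w : G.Walk x y) {a b : V} (ha : a ∈ w.support)
    (hb : b ∈ w.support) (hab : G.Adj a b) (he : s(a, b) ∉ w.edges) :
    ∃ w' : G.Walk x y, w'.support ⊆ w.support ∧ w'.length < w.length := by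
  induction w with
  | nil => simp_all
  | @cons x z y hxz q ih =>
    by_cases hax : a = x
    · subst hax
      exact exists_shorter_of_adj_start _ hb hab he
    by_cases hbx : b = x
    · subst hbx
      exact exists_shorter_of_adj_start _ ha hab.symm (by rwa [Sym2.eq_swap])
    obtain ⟨q', hsub, hlt⟩ := ih (by simp_all) (by simp_all) (by simp_all)
    refine ⟨cons hxz q', ?_, by simpa using hlt⟩
    simpa using List.cons_subset_cons x hsub

theorem exists_isPath_isChordless (w : G.Walk x y) :
    ∃ p : G.Walk x y, p.IsPath ∧ p.IsChordless ∧ p.support ⊆ w.support := by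
  classical
  have hex : ∃ n, ∃ w' : G.Walk x y, w'.support ⊆ w.support ∧ w'.length = n :=
    ⟨_, w, List.Subset.refl _, rfl⟩
  obtain ⟨w₀, hw₀, hlen⟩ := Nat.find_spec hex
  have hmin (w' : G.Walk x y) (h : w'.support ⊆ w.support) : w₀.length ≤ w'.length :=
    hlen ▸ Nat.find_min' hex ⟨w', h, rfl⟩
  refine ⟨w₀.bypass, w₀.bypass_isPath, isChordless_iff_forall_mem_edges.mpr fun a b ha hb hab => ?_,
    List.Subset.trans w₀.support_bypass_subset_support hw₀⟩
  by_contra he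
  obtain ⟨w', hsub, hlt⟩ := w₀.bypass.exists_shorter_of_adj ha hb hab he
  have := hmin w' (List.Subset.trans hsub (List.Subset.trans w₀.support_bypass_subset_support hw₀))
  have := w₀.length_bypass_le_length
  omega

theorem IsPath.isCycle_append_reverse {p q : G.Walk x y} (hp : p.IsPath) (hq : q.IsPath)
    (hp2 : 2 ≤ p.length) (hq1 : 1 ≤ q.length)
    (hpq : ∀ a ∈ p.support, a ∈ q.support → a = x ∨ a = y) :
    (p.append q.reverse).IsCycle := by
  cases p with
  | nil => simp at hp2
  | cons h t =>
    obtain ⟨ht, hxt⟩ := (cons_isPath_iff _ _).mp hp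
    have hqr := hq.reverse.support_nodup
    rw [← cons_tail_support, List.nodup_cons] at hqr
    have hpath : (t.append q.reverse).IsPath := by
      rw [isPath_def, support_append, List.nodup_append]
      refine ⟨ht.support_nodup, hqr.2, fun a ha b hb hab => ?_⟩
      subst hab
      rcases hpq a (by simp [ha]) (by simpa using List.mem_of_mem_tail hb) with rfl | rfl
      · exact hxt ha
      · exact hqr.1 hb
    rw [cons_append]
    refine isCycle_iff_isPath_tail_and_le_length.mpr ⟨by simpa using hpath, ?_⟩
    simp only [length_cons, length_append, length_reverse] at hp2 ⊢
    omega

end SimpleGraph.Walk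

section

variable {V : Type u} {G : SimpleGraph V}

theorem IsChordal.not_isChordless (hG : IsChordal G) {v : V} {c : G.Walk v v} (hc : c.IsCycle)
    (hlen : 4 ≤ c.length) : ¬ c.IsChordless := fun hcl => by
  obtain ⟨a, b, ha, hb, hab, hnot⟩ := hG c hc hlen
  exact hnot (adj_toSubgraph_iff_mem_edges.mpr (hcl.mem_edges ha hb hab))

theorem IsChordal.adj_of_isChordless (hG : IsChordal G) {x y : V} (hxy : x ≠ y)
    {p q : G.Walk x y} (hp : p.IsPath) (hq : q.IsPath) (hpc : p.IsChordless)
    (hqc : q.IsChordless)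
    (hpq : ∀ a ∈ p.support, ∀ b ∈ q.support, a ≠ x → a ≠ y → b ≠ x → b ≠ y →
      a ≠ b ∧ ¬ G.Adj a b) :
    G.Adj x y := by
  -- Otherwise `p` followed by `q` reversed is a chordless cycle of length at least four.
  by_contra hnadj
  have two_le (r : G.Walk x y) : 2 ≤ r.length := by
    have h0 : r.length ≠ 0 := fun h => hxy (eq_of_length_eq_zero h)
    have h1 : r.length ≠ 1 := fun h => hnadj (adj_of_length_eq_one h)
    omega
  have hcross : ∀ a ∈ p.support, ∀ b ∈ q.support, G.Adj a b →
      s(a, b) ∈ p.edges ∨ s(a, b) ∈ q.edges := by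
    intro a ha b hb hab
    by_cases hax : a = x ∨ a = y
    · exact .inr (hqc.mem_edges (by rcases hax with rfl | rfl <;> simp) hb hab)
    by_cases hbx : b = x ∨ b = y
    · exact .inl (hpc.mem_edges ha (by rcases hbx with rfl | rfl <;> simp) hab)
    rw [not_or] at hax hbx
    exact absurd hab (hpq a ha b hb hax.1 hax.2 hbx.1 hbx.2).2
  have hcyc : (p.append q.reverse).IsCycle :=
    hp.isCycle_append_reverse hq (two_le p) (by linarith [two_le q]) fun a ha haq => by
      by_contra h
      rw [not_or] at h
      exact (hpq a ha a haq h.1 h.2 h.1 h.2).1 rfl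
  refine hG.not_isChordless hcyc
    (by simp only [length_append, length_reverse]; linarith [two_le p, two_le q])
    (isChordless_iff_forall_mem_edges.mpr fun a b ha hb hab => ?_)
  simp only [mem_support_append_iff, support_reverse, List.mem_reverse, edges_append,
    edges_reverse, List.mem_append] at ha hb ⊢
  rcases ha with ha | ha <;> rcases hb with hb | hb
  · exact .inl (hpc.mem_edges ha hb hab)
  · exact hcross a ha b hb hab
  · rw [Sym2.eq_swap]
    exact hcross b hb a ha hab.symm
  · exact .inr (hqc.mem_edges ha hb hab)

def ReachableAvoiding (G : SimpleGraph V) (S : Set V) (a b : V) : Prop :=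
  ∃ w : G.Walk a b, ∀ u ∈ w.support, u ∉ S

namespace ReachableAvoiding

variable {S : Set V} {a b c : V}

theorem refl (ha : a ∉ S) : ReachableAvoiding G S a a :=
  ⟨nil, by simpa using ha⟩

theorem notMem_right (h : ReachableAvoiding G S a b) : b ∉ S :=
  h.elim fun w hw => hw b w.end_mem_support

theorem symm (h : ReachableAvoiding G S a b) : ReachableAvoiding G S b a :=
  h.elim fun w hw => ⟨w.reverse, by simpa using hw⟩

theorem trans (hab : ReachableAvoiding G S a b) (hbc : ReachableAvoiding G S b c) :
    ReachableAvoiding G S a c := by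
  obtain ⟨w₁, hw₁⟩ := hab
  obtain ⟨w₂, hw₂⟩ := hbc
  exact ⟨w₁.append w₂, fun u hu => (mem_support_append_iff _ _).mp hu |>.elim (hw₁ u) (hw₂ u)⟩

theorem adj (h : ReachableAvoiding G S a b) (hbc : G.Adj b c) (hc : c ∉ S) :
    ReachableAvoiding G S a c :=
  h.trans ⟨hbc.toWalk, by simp [h.notMem_right, hc]⟩

theorem of_mem_support {w : G.Walk a b} (hw : ∀ u ∈ w.support, u ∉ S) {u : V}
    (hu : u ∈ w.support) : ReachableAvoiding G S a u :=
  ⟨w.takeUntil u hu, fun v hv => hw v (w.support_takeUntil_subset_support hu hv)⟩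

end ReachableAvoiding

theorem exists_adj_reachableAvoiding_of_walk {S : Set V} {a b x : V} (w : G.Walk a b)
    (hw : ∀ u ∈ w.support, u ∉ S \ {x}) (ha : a ∉ S) (hx : x ∈ S) (hxw : x ∈ w.support) :
    ∃ u, G.Adj u x ∧ ReachableAvoiding G S a u := by
  induction w with
  | nil => exact absurd (by simpa using hxw) (ne_of_mem_of_not_mem hx ha)
  | @cons a a' b h q ih =>
    by_cases ha'x : a' = x
    · exact ⟨a, ha'x ▸ h, .refl ha⟩
    have ha' : a' ∉ S := fun h' => hw a' (by simp) ⟨h', ha'x⟩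
    obtain ⟨u, hux, hu⟩ := ih (fun u hu => hw u (by simp [hu])) ha'
      (by simpa [ne_of_mem_of_not_mem hx ha] using hxw)
    exact ⟨u, hux, ((ReachableAvoiding.refl ha).adj h ha').trans hu⟩

theorem exists_separator [Fintype V] {a b : V} (hab : a ≠ b) (hnadj : ¬ G.Adj a b) :
    ∃ S : Set V, a ∉ S ∧ b ∉ S ∧ ¬ ReachableAvoiding G S a b ∧
      ∀ x ∈ S, (∃ u, G.Adj u x ∧ ReachableAvoiding G S a u) ∧
        ∃ u, G.Adj u x ∧ ReachableAvoiding G S b u := by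
  -- A separator of minimum size works: removing one of its vertices `x` reconnects `a` and `b`,
  -- necessarily through `x`.
  classical
  let IsSep (T : Finset V) : Prop := a ∉ T ∧ b ∉ T ∧ ¬ ReachableAvoiding G T a b
  have hsep : IsSep (Finset.univ \ {a, b}) := by
    refine ⟨by simp, by simp, fun ⟨w, hw⟩ => ?_⟩
    cases w with
    | nil => exact hab rfl
    | @cons _ z _ h q =>
      have hzb : z ≠ b := fun hzb => hnadj (hzb ▸ h)
      exact hw z (by simp) (by simp [h.ne', hzb])
  obtain ⟨S, hS, hmin⟩ := Finset.exists_min_image (Finset.univ.filter IsSep) Finset.card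
    ⟨_, Finset.mem_filter.mpr ⟨Finset.mem_univ _, hsep⟩⟩
  obtain ⟨-, haS, hbS, hSab⟩ := Finset.mem_filter.mp hS
  refine ⟨S, haS, hbS, hSab, fun x hx => ?_⟩
  have hreach : ReachableAvoiding G ↑(S.erase x) a b := by
    by_contra h
    have := hmin (S.erase x) (Finset.mem_filter.mpr ⟨Finset.mem_univ _,
      ⟨by simp [haS], by simp [hbS], h⟩⟩)
    exact (Finset.card_erase_lt_of_mem hx).not_ge this
  obtain ⟨w, hw⟩ := hreach
  rw [Finset.coe_erase] at hw
  have hxw : x ∈ w.support := by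
    by_contra hxw
    exact hSab ⟨w, fun u hu huS => hw u hu ⟨huS, by rintro rfl; exact hxw hu⟩⟩
  exact ⟨exists_adj_reachableAvoiding_of_walk w hw haS (by simpa using hx) hxw,
    exists_adj_reachableAvoiding_of_walk w.reverse (by simpa using hw) hbS (by simpa using hx)
      (by simpa using hxw)⟩

theorem exists_isPath_isChordless_through {S : Set V} {c x y ux uy : V} (hx : G.Adj ux x)
    (hux : ReachableAvoiding G S c ux) (hy : G.Adj uy y) (huy : ReachableAvoiding G S c uy) :
    ∃ p : G.Walk x y, p.IsPath ∧ p.IsChordless ∧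
      ∀ u ∈ p.support, u = x ∨ u = y ∨ ReachableAvoiding G S c u := by
  obtain ⟨w, hw⟩ := hux.symm.trans huy
  obtain ⟨p, hp, hpc, hsub⟩ := (cons hx.symm (w.concat hy)).exists_isPath_isChordless
  refine ⟨p, hp, hpc, fun u hu => ?_⟩
  have hu' := hsub hu
  simp only [support_cons, support_concat, List.mem_cons, List.mem_append,
    List.not_mem_nil, or_false] at hu'
  rcases hu' with rfl | hu' | rfl
  · exact .inl rfl
  · exact .inr (.inr (hux.trans (.of_mem_support hw hu')))
  · exact .inr (.inl rfl)

theorem IsChordal.isClique_of_separator (hG : IsChordal G) {S : Set V} {a b : V}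
    (hsep : ¬ ReachableAvoiding G S a b)
    (hfull : ∀ x ∈ S, (∃ u, G.Adj u x ∧ ReachableAvoiding G S a u) ∧
      ∃ u, G.Adj u x ∧ ReachableAvoiding G S b u) :
    G.IsClique S := by
  intro x hx y hy hxy
  obtain ⟨⟨uxa, hxa, hxa'⟩, ⟨uxb, hxb, hxb'⟩⟩ := hfull x hx
  obtain ⟨⟨uya, hya, hya'⟩, ⟨uyb, hyb, hyb'⟩⟩ := hfull y hy
  obtain ⟨p, hp, hpc, hpa⟩ := exists_isPath_isChordless_through hxa hxa' hya hya'
  obtain ⟨q, hq, hqc, hqb⟩ := exists_isPath_isChordless_through hxb hxb' hyb hyb'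
  refine hG.adj_of_isChordless hxy hp hq hpc hqc fun u hu w hw hux huy hwx hwy => ?_
  have hua := ((hpa u hu).resolve_left hux).resolve_left huy
  have hwb := ((hqb w hw).resolve_left hwx).resolve_left hwy
  refine ⟨?_, fun huw => hsep ((hua.adj huw hwb.notMem_right).trans hwb.symm)⟩
  rintro rfl
  exact hsep (hua.trans hwb.symm)

theorem IsChordal.comap {W : Type*} (hG : IsChordal G) (f : W ↪ V) : IsChordal (G.comap f) := by
  intro v w hw hlen
  let F : G.comap f →g G := ⟨f, id⟩
  obtain ⟨a, b, ha, hb, hab, hnot⟩ :=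
    hG (w.map F) (hw.map f.injective) (by rwa [length_map])
  rw [Walk.support_map, List.mem_map] at ha hb
  obtain ⟨a, ha, rfl⟩ := ha
  obtain ⟨b, hb, rfl⟩ := hb
  refine ⟨a, b, ha, hb, hab, fun h => hnot ?_⟩
  rw [toSubgraph_map]
  exact ⟨a, b, h, rfl, rfl⟩

def IsSimplicial (G : SimpleGraph V) (v : V) : Prop :=
  G.IsClique (G.neighborSet v)

theorem IsChordal.exists_isSimplicial_reachableAvoiding [Fintype V] (hG : IsChordal G)
    {S : Set V} {a b : V} (ha : a ∉ S) (hb : b ∉ S)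
    (hsep : ¬ ReachableAvoiding G S a b) (hS : G.IsClique S)
    (ih : ∀ (W : Type u) [Fintype W] (H : SimpleGraph W), Fintype.card W < Fintype.card V →
      IsChordal H → H = ⊤ ∨ ∃ x y, x ≠ y ∧ ¬ H.Adj x y ∧ IsSimplicial H x ∧ IsSimplicial H y) :
    ∃ v, ReachableAvoiding G S a v ∧ IsSimplicial G v := by
  -- The induction hypothesis applies to `G[s]`, which misses `b`; a vertex of `s` outside the
  -- clique `S` has all its neighbours in `s`.
  classical
  let s : Set V := S ∪ {u | ReachableAvoiding G S a u}
  let H := G.comap (Function.Embedding.subtype (· ∈ s))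
  have hcard : Fintype.card s < Fintype.card V :=
    Fintype.card_subtype_lt (x := b) fun hbs => hbs.elim hb hsep
  have of_side (z : s) (hz : z.1 ∉ S) (hzH : IsSimplicial H z) :
      ∃ v, ReachableAvoiding G S a v ∧ IsSimplicial G v := by
    have hza : ReachableAvoiding G S a z := z.2.resolve_left hz
    have hnbr {u : V} (hu : G.Adj z u) : u ∈ s := by
      by_cases huS : u ∈ S
      · exact .inl huS
      · exact .inr (hza.adj hu huS)
    refine ⟨z, hza, fun u hu w hw huw => ?_⟩
    exact hzH (show H.Adj z ⟨u, hnbr hu⟩ from hu) (show H.Adj z ⟨w, hnbr hw⟩ from hw)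
      (fun h => huw (congrArg Subtype.val h))
  rcases ih s H hcard (hG.comap _) with htop | ⟨x, y, hxy, hnxy, hx, hy⟩
  · exact of_side ⟨a, .inr (.refl ha)⟩ ha
      ((isClique_univ.mpr htop).subset (Set.subset_univ _))
  · by_cases hxS : x.1 ∈ S
    · refine of_side y (fun hyS => hnxy ?_) hy
      exact hS hxS hyS (fun h => hxy (Subtype.ext h))
    · exact of_side x hxS hx

theorem IsChordal.eq_top_or_exists_isSimplicial [Fintype V] (hG : IsChordal G) :
    G = ⊤ ∨ ∃ x y, x ≠ y ∧ ¬ G.Adj x y ∧ IsSimplicial G x ∧ IsSimplicial G y := by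
  induction hn : Fintype.card V using Nat.strong_induction_on generalizing V with
  | _ n ih =>
  rw [or_iff_not_imp_left, ← Ne, ne_top_iff_exists_not_adj]
  rintro ⟨a, b, hab, hnadj⟩
  obtain ⟨S, ha, hb, hsep, hfull⟩ := exists_separator hab hnadj
  have hS := hG.isClique_of_separator hsep hfull
  have ih' (W : Type u) [Fintype W] (H : SimpleGraph W) (hW : Fintype.card W < Fintype.card V)
      (hH : IsChordal H) := ih _ (hn ▸ hW) hH rfl
  obtain ⟨x, hax, hx⟩ := hG.exists_isSimplicial_reachableAvoiding ha hb hsep hS ih'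
  obtain ⟨y, hby, hy⟩ := hG.exists_isSimplicial_reachableAvoiding hb ha
    (fun h => hsep h.symm) hS ih'
  refine ⟨x, y, ?_, fun hxy => hsep ((hax.adj hxy hby.notMem_right).trans hby.symm), hx, hy⟩
  rintro rfl
  exact hsep (hax.trans hby.symm)

theorem IsChordal.exists_isSimplicial [Fintype V] [Nonempty V] (hG : IsChordal G) :
    ∃ v, IsSimplicial G v := by
  obtain htop | ⟨x, -, -, -, hx, -⟩ := hG.eq_top_or_exists_isSimplicial
  · exact ⟨Classical.arbitrary V, (isClique_univ.mpr htop).subset (Set.subset_univ _)⟩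
  · exact ⟨x, hx⟩

end

open Matrix

open scoped ComplexOrder MatrixOrder in
theorem Matrix.PosSemidef.exists_eq_gram {𝕜 ι : Type*} [RCLike 𝕜] [Fintype ι] {M : Matrix ι ι 𝕜}
    (hM : M.PosSemidef) : ∃ d : ι → EuclideanSpace 𝕜 ι, M = gram 𝕜 d := by
  obtain ⟨B, rfl⟩ := CStarAlgebra.nonneg_iff_eq_star_mul_self.mp hM.nonneg
  refine ⟨fun k => WithLp.toLp 2 fun i => B i k, ?_⟩
  ext k l
  simp [PiLp.inner_apply, Matrix.mul_apply, mul_comm]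

theorem exists_sum_smul_inner_eq {𝕜 E κ : Type*} [RCLike 𝕜] [NormedAddCommGroup E]
    [InnerProductSpace 𝕜 E] [Fintype κ] (g : κ → E) (x : E) :
    ∃ c : κ → 𝕜, (∀ k, inner 𝕜 (g k) (∑ l, c l • g l) = inner 𝕜 (g k) x) ∧
      ‖∑ l, c l • g l‖ ≤ ‖x‖ := by
  set K := Submodule.span 𝕜 (Set.range g)
  have : FiniteDimensional 𝕜 K := FiniteDimensional.span_of_finite 𝕜 (Set.finite_range g)
  obtain ⟨c, hc⟩ := (Submodule.mem_span_range_iff_exists_fun 𝕜).mp (K.starProjection_apply_mem x)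
  refine ⟨c, fun k => ?_, hc ▸ K.norm_starProjection_apply_le x⟩
  have h := K.starProjection_inner_eq_zero x (g k) (Submodule.subset_span (Set.mem_range_self k))
  rw [inner_eq_zero_symm, inner_sub_right, sub_eq_zero, ← hc] at h
  exact h.symm

theorem Matrix.PosSemidef.exists_submatrix_mulVec_eq {ι κ : Type*} [Fintype ι] [Fintype κ]
    {M : Matrix ι ι ℝ} (hM : M.PosSemidef) (f : κ → ι) (i : ι) :
    ∃ c : κ → ℝ, M.submatrix f f *ᵥ c = (fun k => M (f k) i) ∧
      c ⬝ᵥ M.submatrix f f *ᵥ c ≤ M i i := by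
  obtain ⟨d, rfl⟩ := hM.exists_eq_gram
  obtain ⟨c, hc, hle⟩ := exists_sum_smul_inner_eq (𝕜 := ℝ) (d ∘ f) (d i)
  refine ⟨c, funext fun k => ?_, ?_⟩
  · have h := hc k
    simp only [Function.comp_apply, inner_sum, inner_smul_right] at h
    simpa [mulVec, dotProduct, mul_comm] using h
  · have h := star_dotProduct_gram_mulVec (𝕜 := ℝ) (d ∘ f) c c
    rw [star_trivial, real_inner_self_eq_norm_sq] at h
    change c ⬝ᵥ gram ℝ (d ∘ f) *ᵥ c ≤ inner ℝ (d i) (d i)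
    rw [h, real_inner_self_eq_norm_sq]
    gcongr

theorem Matrix.PosSemidef.fromBlocks_mulVec {W : Type*} [Fintype W] {P : Matrix W W ℝ}
    (hP : P.PosSemidef) (z : W → ℝ) {α : ℝ} (hα : z ⬝ᵥ P *ᵥ z ≤ α) :
    (fromBlocks (of fun _ _ : Unit => α) (replicateRow Unit (P *ᵥ z))
      (replicateCol Unit (P *ᵥ z)) P).PosSemidef := by
  have hzP : z ᵥ* P = P *ᵥ z := by
    rw [← mulVec_transpose, ← conjTranspose_eq_transpose_of_trivial, hP.isHermitian]
  set R : Matrix W (Unit ⊕ W) ℝ := fromCols (replicateCol Unit z) 1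
  have key : fromBlocks (of fun _ _ : Unit => α) (replicateRow Unit (P *ᵥ z))
      (replicateCol Unit (P *ᵥ z)) P
      = Rᴴ * P * R + diagonal (Sum.elim (fun _ => α - z ⬝ᵥ P *ᵥ z) 0) := by
    ext (i | i) (j | j) <;>
      simp [R, transpose_fromCols, fromRows_mul, ← replicateCol_mulVec, ← replicateRow_vecMul,
        replicateRow_mulVec_eq_const, dotProduct_comm (P *ᵥ z), hzP, diagonal_apply]
  rw [key]
  refine (hP.conjTranspose_mul_mul_same R).add (PosSemidef.diagonal ?_)
  rintro (i | i) <;> simp [hα]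

section

variable {V : Type u} {G : SimpleGraph V}

def HasPosSemidefCompletion (G : SimpleGraph V) (Q : Matrix V V ℝ) : Prop :=
  ∃ P : Matrix V V ℝ, P.PosSemidef ∧ ∀ β γ, (β = γ ∨ G.Adj β γ) → P β γ = Q β γ

theorem HasPosSemidefCompletion.posSemidef_submatrix {Q : Matrix V V ℝ}
    (h : HasPosSemidefCompletion G Q) {C : Set V} (hC : G.IsClique C) :
    (Q.submatrix ((↑) : C → V) (↑)).PosSemidef := by
  obtain ⟨P, hP, hPQ⟩ := h
  convert hP.submatrix ((↑) : C → V) using 1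
  ext i j
  refine (hPQ i j ?_).symm
  by_cases hij : (i : V) = j
  · exact .inl hij
  · exact .inr (hC i.2 j.2 hij)

theorem exists_mulVec_eq_of_isSimplicial [Fintype V] {Q : Matrix V V ℝ} {v : V}
    (hv : IsSimplicial G v)
    (hK : (Q.submatrix ((↑) : ↥(insert v (G.neighborSet v)) → V) (↑)).PosSemidef)
    {P' : Matrix {u // u ≠ v} {u // u ≠ v} ℝ}
    (hP'Q : ∀ β γ : {u // u ≠ v}, (β = γ ∨ G.Adj β γ) → P' β γ = Q β γ) :
    ∃ z : {u // u ≠ v} → ℝ, (∀ u : {u // u ≠ v}, G.Adj v u → (P' *ᵥ z) u = Q u v) ∧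
      z ⬝ᵥ P' *ᵥ z ≤ Q v v := by
  let N := {w : {u // u ≠ v} // G.Adj v w}
  let g : Option N → ↥(insert v (G.neighborSet v)) :=
    fun o => o.elim ⟨v, Set.mem_insert _ _⟩ fun w => ⟨w, Set.mem_insert_of_mem _ w.2⟩
  obtain ⟨c, hc, hcv⟩ := (hK.submatrix g).exists_submatrix_mulVec_eq some none
  let z : {u // u ≠ v} → ℝ := fun w => if h : G.Adj v w then c ⟨w, h⟩ else 0
  have hdot (F : {u // u ≠ v} → ℝ) : F ⬝ᵥ z = ∑ k : N, F k * c k := by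
    rw [dotProduct, ← Fintype.sum_subtype_add_sum_subtype (fun w : {u // u ≠ v} => G.Adj v w)
      fun w => F w * z w]
    have hN (k : N) : z k = c k := dif_pos k.2
    have hN' (k : {w : {u // u ≠ v} // ¬ G.Adj v w}) : z k = 0 := dif_neg k.2
    simp only [hN, hN', mul_zero, Finset.sum_const_zero, add_zero]
    rfl
  have hP'N (k l : N) : P' k l = Q k l := by
    refine hP'Q k l ?_
    by_cases hkl : k = l
    · exact .inl (congrArg Subtype.val hkl)
    · exact .inr (hv k.2 l.2 fun h => hkl (Subtype.ext (Subtype.ext h)))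
  have hrow (k : N) : (P' *ᵥ z) k = Q k v := by
    rw [mulVec, hdot]
    simpa [hP'N, mulVec, dotProduct, g] using congrFun hc k
  refine ⟨z, fun u hu => hrow ⟨u, hu⟩, ?_⟩
  rw [dotProduct_comm, hdot]
  rw [hc] at hcv
  simpa [hrow, dotProduct, mul_comm, g] using hcv

theorem hasPosSemidefCompletion_of_isSimplicial [Fintype V] {Q : Matrix V V ℝ} {v : V}
    (hv : IsSimplicial G v)
    (hK : (Q.submatrix ((↑) : ↥(insert v (G.neighborSet v)) → V) (↑)).PosSemidef)
    (h : HasPosSemidefCompletion (G.comap (Function.Embedding.subtype (· ≠ v)))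
      (Q.submatrix Subtype.val Subtype.val)) :
    HasPosSemidefCompletion G Q := by
  obtain ⟨P', hP', hP'Q⟩ := h
  obtain ⟨z, hrow, hquad⟩ := exists_mulVec_eq_of_isSimplicial hv hK hP'Q
  have hQsymm (u : V) (hu : G.Adj v u) : Q u v = Q v u := by
    simpa using hK.isHermitian.apply ⟨v, Set.mem_insert _ _⟩ ⟨u, Set.mem_insert_of_mem _ hu⟩
  let e : V → Unit ⊕ {u // u ≠ v} := fun β => if h : β = v then .inl () else .inr ⟨β, h⟩
  refine ⟨_, (hP'.fromBlocks_mulVec z hquad).submatrix e, fun β γ hβγ => ?_⟩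
  by_cases hβ : β = v <;> by_cases hγ : γ = v
  · simp [e, hβ, hγ]
  · subst hβ
    have hadj := hβγ.resolve_left (Ne.symm hγ)
    simpa [e, hγ, hQsymm γ hadj] using hrow ⟨γ, hγ⟩ hadj
  · subst hγ
    simpa [e, hβ] using hrow ⟨β, hβ⟩ (hβγ.resolve_left hβ).symm
  · simpa [e, hβ, hγ] using hP'Q ⟨β, hβ⟩ ⟨γ, hγ⟩ (hβγ.imp Subtype.ext id)

theorem IsChordal.hasPosSemidefCompletion [Fintype V] (hG : IsChordal G) {Q : Matrix V V ℝ}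
    (hQ : ∀ C : Set V, G.IsClique C → (Q.submatrix ((↑) : C → V) (↑)).PosSemidef) :
    HasPosSemidefCompletion G Q := by
  induction hn : Fintype.card V using Nat.strong_induction_on generalizing V with
  | _ n ih =>
  cases isEmpty_or_nonempty V
  · exact ⟨0, .zero, fun β => isEmptyElim β⟩
  obtain ⟨v, hv⟩ := hG.exists_isSimplicial
  refine hasPosSemidefCompletion_of_isSimplicial hv
    (hQ _ (isClique_insert.mpr ⟨hv, fun _ hu _ => hu⟩)) (ih _ ?_ (hG.comap _) ?_ rfl)
  · exact hn ▸ Fintype.card_subtype_lt (x := v) (not_not.mpr rfl)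
  · intro C hC
    have hCG : G.IsClique (Subtype.val '' C) := by
      rintro _ ⟨i, hi, rfl⟩ _ ⟨j, hj, rfl⟩ hij
      exact hC hi hj (ne_of_apply_ne _ hij)
    exact (hQ _ hCG).submatrix fun c : C => ⟨c.1.1, Set.mem_image_of_mem _ c.2⟩

theorem exists_isMaximalClique_superset [Finite V] {C : Set V} (hC : G.IsClique C) :
    ∃ D, IsMaximalClique G D ∧ C ⊆ D := by
  obtain ⟨D, hCD, hD⟩ := (Set.toFinite {D : Set V | G.IsClique D}).exists_le_maximal hC
  exact ⟨D, ⟨hD.1, fun E hE hDE => (hD.2 hE hDE).antisymm hDE⟩, hCD⟩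

end

theorem psd_completion_iff_cliques_posSemidef_general (V : Type*) [Fintype V]
    (G : SimpleGraph V) (hchord : IsChordal G)
    (Q : Matrix V V ℝ) :
    (∃ P : Matrix V V ℝ, P.PosSemidef ∧
        ∀ β γ, (β = γ ∨ G.Adj β γ) → P β γ = Q β γ) ↔
      ∀ C : Set V, IsMaximalClique G C →
        Matrix.PosSemidef (Q.submatrix (fun v : C => v.1) (fun v : C => v.1)) := by
  refine ⟨fun h C hC => HasPosSemidefCompletion.posSemidef_submatrix h hC.1, fun h => ?_⟩
  refine hchord.hasPosSemidefCompletion fun C hC => ?_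
  obtain ⟨D, hD, hCD⟩ := exists_isMaximalClique_superset hC
  exact (h D hD).submatrix (Set.inclusion hCD)

/-- Grone–Johnson–Sá–Wolkowicz: a partial symmetric matrix with chordal sparsity
pattern `G` has a PSD completion iff all principal submatrices indexed by maximal
cliques of `G` are PSD. -/
theorem psd_completion_iff_cliques_posSemidef (V : Type*) [Fintype V] [DecidableEq V]
    (G : SimpleGraph V) (hchord : IsChordal G)
    (Q : Matrix V V ℝ) (hQsym : Q.IsSymm)
    (hpat : ∀ β γ, β ≠ γ → ¬ G.Adj β γ → Q β γ = 0) :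
    (∃ P : Matrix V V ℝ, P.PosSemidef ∧
        ∀ β γ, (β = γ ∨ G.Adj β γ) → P β γ = Q β γ) ↔
      ∀ C : Set V, IsMaximalClique G C →
        Matrix.PosSemidef (Q.submatrix (fun v : C => v.1) (fun v : C => v.1)) :=
  psd_completion_iff_cliques_posSemidef_general V G hchord Q
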